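/- arXiv:1901.04316 — 3 statements merged into one kernel-verified Lean document; each statement's English description precedes it below -/
import Mathlib

section
/- Let ρ ≥ 2 be an integer and let ⟨x,y⟩ = x_1y_1 + ⋯ + x_{ρ−1}y_{ρ−1} − x_ρy_ρ be the Minkowski form on ℝ^ρ. If v_1, …, v_k ∈ ℝ^ρ satisfy ⟨v_i,v_i⟩ = 1 for all i and ⟨v_i,v_j⟩ = −1 for all i ≠ j, then k ≤ ρ. (Thus a cluster of mutually tangent hyperspheres in ℝ^{ρ−2} has at most ρ members; in particular, for k ≥ 3 such vectors are linearly independent because their Gram matrix J_k is nondegenerate.) -/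
/-- The Minkowski form `x₁y₁ + ⋯ + x_{ρ-1}y_{ρ-1} - x_ρ y_ρ` on `ℝ^ρ`
(the last coordinate carries the minus sign). -/
noncomputable def mink {ρ : ℕ} (x y : Fin ρ → ℝ) : ℝ :=
  ∑ i : Fin ρ, (if (i : ℕ) = ρ - 1 then -(x i * y i) else x i * y i)

/-!
If `∑ cⱼ vⱼ = 0` for vectors with Gram matrix `J_k`, pairing with `vᵢ` gives `2cᵢ = ∑ cⱼ` for
every `i`. Summing over `i` yields `(k - 2) ∑ cⱼ = 0`, so for `k ≥ 3` all `cᵢ` vanish: the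
vectors are linearly independent, and there are at most `ρ` of them in `ℝ^ρ`.
-/

section GramJ

variable {K M ι : Type*} [Field K] [AddCommGroup M] [Module K M] [Fintype ι]
  {B : LinearMap.BilinForm K M} {v : ι → M}

theorem two_mul_coeff_eq_sum_of_gram_J (hvi : ∀ i, B (v i) (v i) = 1)
    (hvij : ∀ i j, i ≠ j → B (v i) (v j) = -1) {c : ι → K} (hc : ∑ j, c j • v j = 0)
    (i : ι) : 2 * c i = ∑ j, c j := by
  classical
  have hpair : ∑ j, c j * B (v j) (v i) = 0 := by
    simpa only [map_sum, map_smul, LinearMap.sum_apply, LinearMap.smul_apply, smul_eq_mul,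
      map_zero, LinearMap.zero_apply] using congrArg (fun x => B x (v i)) hc
  have hsplit : ∑ j, c j * B (v j) (v i) = c i - ∑ j ∈ Finset.univ.erase i, c j := by
    rw [← Finset.add_sum_erase _ _ (Finset.mem_univ i), hvi, sub_eq_add_neg,
      ← Finset.sum_neg_distrib]
    congr 1
    · ring
    · refine Finset.sum_congr rfl fun j hj => ?_
      rw [hvij j i (Finset.ne_of_mem_erase hj)]
      ring
  rw [Finset.sum_erase_eq_sub (Finset.mem_univ i)] at hsplit
  linear_combination hsplit.symm.trans hpair

theorem linearIndependent_of_gram_J [CharZero K] (hk : 3 ≤ Fintype.card ι)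
    (hvi : ∀ i, B (v i) (v i) = 1) (hvij : ∀ i j, i ≠ j → B (v i) (v j) = -1) :
    LinearIndependent K v := by
  rw [Fintype.linearIndependent_iff]
  intro c hc i
  have hcoeff := two_mul_coeff_eq_sum_of_gram_J hvi hvij hc
  have hsum : ((Fintype.card ι : K) - 2) * ∑ j, c j = 0 := by
    have := Finset.sum_congr rfl fun j (_ : j ∈ Finset.univ) => hcoeff j
    rw [← Finset.mul_sum, Finset.sum_const, Finset.card_univ, nsmul_eq_mul] at this
    linear_combination -this
  have hcard : (Fintype.card ι : K) - 2 ≠ 0 := by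
    rw [sub_ne_zero]
    exact_mod_cast (by omega : Fintype.card ι ≠ 2)
  have := hcoeff i
  rw [(mul_eq_zero.mp hsum).resolve_left hcard] at this
  simpa using this

end GramJ

noncomputable def minkForm (ρ : ℕ) : LinearMap.BilinForm ℝ (Fin ρ → ℝ) :=
  LinearMap.mk₂ ℝ mink
    (fun x x' y => by
      simp only [mink, ← Finset.sum_add_distrib]
      exact Finset.sum_congr rfl fun i _ => by split_ifs <;> simp only [Pi.add_apply] <;> ring)
    (fun a x y => by
      simp only [mink, smul_eq_mul, Finset.mul_sum]
      exact Finset.sum_congr rfl fun i _ => by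
        split_ifs <;> simp only [Pi.smul_apply, smul_eq_mul] <;> ring)
    (fun x y y' => by
      simp only [mink, ← Finset.sum_add_distrib]
      exact Finset.sum_congr rfl fun i _ => by split_ifs <;> simp only [Pi.add_apply] <;> ring)
    (fun a x y => by
      simp only [mink, smul_eq_mul, Finset.mul_sum]
      exact Finset.sum_congr rfl fun i _ => by
        split_ifs <;> simp only [Pi.smul_apply, smul_eq_mul] <;> ring)

/-- A cluster of mutually tangent hyperspheres in `ℝ^{ρ-2}`, i.e. vectors in
Minkowski space `ℝ^{ρ-1,1}` with `⟨vᵢ,vᵢ⟩ = 1` and `⟨vᵢ,vⱼ⟩ = -1` for `i ≠ j`,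
has at most `ρ` members. -/
theorem mutually_tangent_cluster_card_le (ρ k : ℕ) (hρ : 2 ≤ ρ)
    (v : Fin k → Fin ρ → ℝ)
    (hvi : ∀ i, mink (v i) (v i) = 1)
    (hvij : ∀ i j, i ≠ j → mink (v i) (v j) = -1) :
    k ≤ ρ := by
  rcases Nat.lt_or_ge k 3 with hk | hk
  · omega
  have hli : LinearIndependent ℝ v :=
    linearIndependent_of_gram_J (B := minkForm ρ) (by simpa using hk) hvi hvij
  simpa using hli.fintype_card_le_finrank
end

section
/- Fix an integer ρ ≥ 4 and an index i ∈ {1,…,ρ}, and let s ∈ ℝ^ρ be the vector with s_i = 3 − ρ and s_k = 1 for k ≠ i (the Viète involution vector). Then, with x⊙y = xᵀJ_ρy: (1) s⊙e_j = 0 for every j ≠ i; (2) s⊙s = 2(ρ−2)(ρ−3); (3) R_s(e_i) = e_i + (2/(ρ−3))·s; and (4) if ρ ≥ 6, then the reflection R_s does NOT map ℤ^ρ into ℤ^ρ (in particular R_s(e_i) ∉ ℤ^ρ), whereas for ρ = 4 and ρ = 5 it does map ℤ^ρ into ℤ^ρ. -/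
/-- The Lorentz product over `ℝ`, given by the matrix `J_ρ` with diagonal
entries `1` and off-diagonal entries `-1`. -/
noncomputable def lor {ρ : ℕ} (x y : Fin ρ → ℝ) : ℝ :=
  ∑ i, ∑ j, x i * (if i = j then (1 : ℝ) else -1) * y j

/-- Reflection through the hyperplane with normal vector `n`. -/
noncomputable def reflV {ρ : ℕ} (n : Fin ρ → ℝ) (x : Fin ρ → ℝ) : Fin ρ → ℝ :=
  x - (2 * (lor n x / lor n n)) • n

lemma lor_formula {ρ : ℕ} (x y : Fin ρ → ℝ) :
    lor x y = 2 * ∑ k, x k * y k - (∑ k, x k) * (∑ k, y k) := by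
  unfold lor
  have h : ∀ a b : Fin ρ, x a * (if a = b then (1:ℝ) else -1) * y b
      = 2*(if a = b then x b * y b else 0) - x a * y b := by
    intro a b; split
    · rename_i hab; subst hab; ring
    · ring
  simp_rw [h, Finset.sum_sub_distrib, ← Finset.mul_sum, Finset.sum_ite_eq,
    Finset.mem_univ, if_true]
  congr 1
  simp [Finset.mul_sum]
  rw [Finset.sum_comm]
  simp [Finset.sum_mul]

/-- Properties of the Viète involution vector `s` with `s_i = 3 - ρ` and
`s_k = 1` for `k ≠ i`: (1) `s ⊙ e_j = 0` for `j ≠ i`; (2) `s⊙s = 2(ρ-2)(ρ-3)`;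
(3) `R_s(e_i) = e_i + (2/(ρ-3))·s`; (4) for `ρ ≥ 6` the reflection `R_s` does
not map `ℤ^ρ` into `ℤ^ρ` (in particular `R_s(e_i) ∉ ℤ^ρ`), whereas for
`ρ = 4` and `ρ = 5` it does. -/
theorem viete_involution (ρ : ℕ) (hρ : 4 ≤ ρ) (i : Fin ρ) :
    let s : Fin ρ → ℝ := fun k => if k = i then 3 - (ρ : ℝ) else 1
    (∀ j : Fin ρ, j ≠ i → lor s (Pi.single j 1) = 0) ∧
    lor s s = 2 * ((ρ : ℝ) - 2) * ((ρ : ℝ) - 3) ∧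
    reflV s (Pi.single i 1) = Pi.single i 1 + (2 / ((ρ : ℝ) - 3)) • s ∧
    (6 ≤ ρ →
      ¬ (∀ x : Fin ρ → ℤ, ∃ y : Fin ρ → ℤ,
          reflV s (fun t => (x t : ℝ)) = fun t => (y t : ℝ)) ∧
      ¬ (∃ y : Fin ρ → ℤ,
          reflV s (Pi.single i 1) = fun t => (y t : ℝ))) ∧
    (ρ = 4 ∨ ρ = 5 →
      ∀ x : Fin ρ → ℤ, ∃ y : Fin ρ → ℤ,
        reflV s (fun t => (x t : ℝ)) = fun t => (y t : ℝ)) := by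
  intro s
  have hs : ∀ k, s k = if k = i then 3 - (ρ : ℝ) else 1 := fun _ => rfl
  have hρR : (4:ℝ) ≤ (ρ:ℝ) := by exact_mod_cast hρ
  have h2 : (ρ:ℝ) - 2 ≠ 0 := by linarith
  have h3 : (ρ:ℝ) - 3 ≠ 0 := by linarith
  -- sum of s
  have hsum : ∑ k, s k = 2 := by
    have h : ∀ k, s k = 1 + (if k = i then 2 - (ρ:ℝ) else 0) := by
      intro k; rw [hs]; split <;> ring
    simp_rw [h, Finset.sum_add_distrib, Finset.sum_ite_eq', Finset.mem_univ, if_true,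
      Finset.sum_const, Finset.card_univ, Fintype.card_fin, nsmul_eq_mul, mul_one]
    ring
  -- sum of s * x
  have hsx : ∀ x : Fin ρ → ℝ, ∑ k, s k * x k = (∑ k, x k) + (2 - (ρ:ℝ)) * x i := by
    intro x
    have h : ∀ k, s k * x k = x k + (if k = i then (2 - (ρ:ℝ)) * x k else 0) := by
      intro k; rw [hs]; split <;> ring
    simp_rw [h, Finset.sum_add_distrib, Finset.sum_ite_eq', Finset.mem_univ, if_true]
  have hlor : ∀ x : Fin ρ → ℝ, lor s x = 2 * (2 - (ρ:ℝ)) * x i := by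
    intro x
    rw [lor_formula, hsx, hsum]
    ring
  have hsi : s i = 3 - (ρ:ℝ) := by rw [hs]; simp
  have hss : lor s s = 2 * ((ρ:ℝ) - 2) * ((ρ:ℝ) - 3) := by
    rw [hlor, hsi]; ring
  -- pointwise reflection formula
  have hrefl : ∀ (x : Fin ρ → ℝ) (t : Fin ρ),
      reflV s x t = x t + (2 * x i / ((ρ:ℝ) - 3)) * s t := by
    intro x t
    simp only [reflV, Pi.sub_apply, Pi.smul_apply, smul_eq_mul]
    rw [hlor x, hss]
    field_simp
    ring
  refine ⟨?_, hss, ?_, ?_, ?_⟩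
  · intro j hj
    rw [hlor, Pi.single_eq_of_ne (Ne.symm hj)]
    ring
  · funext t
    rw [hrefl]
    simp only [Pi.add_apply, Pi.smul_apply, smul_eq_mul, Pi.single_eq_same]
    ring
  · intro h6
    have hni : ¬ ∃ y : Fin ρ → ℤ, reflV s (Pi.single i 1) = fun t => (y t : ℝ) := by
      rintro ⟨y, hy⟩
      have hnt : Nontrivial (Fin ρ) := Fin.nontrivial_iff_two_le.mpr (by omega)
      obtain ⟨j, hj⟩ := exists_ne i
      have hj' := congrFun hy j
      rw [hrefl, Pi.single_eq_same, Pi.single_eq_of_ne hj, hs] at hj'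
      simp only [if_neg hj, mul_one] at hj'
      -- hj' : 0 + 2 * 1 / (ρ - 3) = y j
      have h6R : (6:ℝ) ≤ (ρ:ℝ) := by exact_mod_cast h6
      have hp : (0:ℝ) < (ρ:ℝ) - 3 := by linarith
      have hlt : (y j : ℝ) < 1 := by
        rw [← hj', zero_add, div_lt_one hp]
        linarith
      have hgt : (0:ℝ) < (y j : ℝ) := by
        rw [← hj', zero_add]
        positivity
      have h1 : (1:ℤ) ≤ y j := by exact_mod_cast hgt
      have : (1:ℝ) ≤ (y j : ℝ) := by exact_mod_cast h1
      linarith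
    refine ⟨fun hall => ?_, hni⟩
    obtain ⟨y, hy⟩ := hall (Pi.single i 1)
    have hcast : (fun t => ((Pi.single i 1 : Fin ρ → ℤ) t : ℝ)) = (Pi.single i 1 : Fin ρ → ℝ) := by
      funext t
      simp [Pi.single_apply, apply_ite (fun z : ℤ => (z:ℝ))]
    refine hni ⟨y, ?_⟩
    rw [← hcast]
    exact hy
  · intro h45 x
    rcases h45 with rfl | rfl
    · refine ⟨fun t => if t = i then -x i else x t + 2 * x i, ?_⟩
      funext t
      rw [hrefl, hs]
      by_cases ht : t = i <;> simp [ht] <;> push_cast <;> norm_num <;> ring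
    · refine ⟨fun t => if t = i then -x i else x t + x i, ?_⟩
      funext t
      rw [hrefl, hs]
      by_cases ht : t = i <;> simp [ht] <;> push_cast <;> norm_num <;> ring
end

section
/- Fix an integer ρ ≥ 1 and let x⊙y = xᵀJ_ρy on ℤ^ρ. If m, m′ ∈ ℤ^ρ satisfy m⊙m = 1 and m′⊙m′ = 1, then m⊙m′ is odd; in particular m⊙m′ ≠ 0, so |m⊙m′| ≥ 1. (Geometrically: two hyperspheres of the configuration, represented by integer vectors of Lorentz norm 1, never intersect transversally — they are tangent or disjoint; this is Property (a) of the Apollonian configuration.) -/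
/-- The Lorentz product over `ℤ`, given by the matrix `J_ρ` with diagonal
entries `1` and off-diagonal entries `-1`. -/
def lorZ {ρ : ℕ} (x y : Fin ρ → ℤ) : ℤ :=
  ∑ i, ∑ j, x i * (if i = j then (1 : ℤ) else -1) * y j

lemma lorZ_mod2 {ρ : ℕ} (x y : Fin ρ → ℤ) :
    ((lorZ x y : ℤ) : ZMod 2) = ((∑ i, x i : ℤ) : ZMod 2) * ((∑ j, y j : ℤ) : ZMod 2) := by
  unfold lorZ
  push_cast
  rw [Finset.sum_mul_sum]
  apply Finset.sum_congr rfl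
  intro i _
  apply Finset.sum_congr rfl
  intro j _
  have h : (if i = j then (1 : ZMod 2) else -1) = 1 := by split <;> decide
  rw [h]; ring

/-- If `m, m' ∈ ℤ^ρ` satisfy `m⊙m = m'⊙m' = 1`, then `m⊙m'` is odd; in
particular `m⊙m' ≠ 0` and `|m⊙m'| ≥ 1`: two hyperspheres of the configuration
never intersect transversally (Property (a)). -/
theorem no_transversal_intersection (ρ : ℕ) (hρ : 1 ≤ ρ)
    (m m' : Fin ρ → ℤ) (hm : lorZ m m = 1) (hm' : lorZ m' m' = 1) :
    Odd (lorZ m m') ∧ lorZ m m' ≠ 0 ∧ 1 ≤ |lorZ m m'| := by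
  have h1 := lorZ_mod2 m m
  have h2 := lorZ_mod2 m' m'
  have h3 := lorZ_mod2 m m'
  rw [hm] at h1
  rw [hm'] at h2
  have key : ∀ a : ZMod 2, a ≠ 0 → a = 1 := by decide
  have hsm : ((∑ i, m i : ℤ) : ZMod 2) = 1 := by
    apply key; intro h; rw [h] at h1; simp at h1
  have hsm' : ((∑ i, m' i : ℤ) : ZMod 2) = 1 := by
    apply key; intro h; rw [h] at h2; simp at h2
  have hodd : Odd (lorZ m m') := by
    rw [hsm, hsm', mul_one] at h3
    rw [← Int.not_even_iff_odd]
    rintro ⟨c, hc⟩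
    rw [hc] at h3
    push_cast at h3
    rw [CharTwo.add_self_eq_zero] at h3
    exact one_ne_zero h3.symm
  refine ⟨hodd, ?_, ?_⟩
  · intro h0; rw [h0] at hodd; simpa using hodd
  · exact Int.one_le_abs (by intro h0; rw [h0] at hodd; simpa using hodd)
end
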